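/- Evasion of two consecutive blocked nodes: for every N ≥ 1 and every blocked set B = {n_1, n_2} with 1 ≤ n_1 and n_2 = n_1 + 1 ≤ 4^N−2 (two consecutive blocked nodes, which are necessarily edge connected and form a 1×2 domino hole), an evasion tour exists. -/

import Mathlib

/-- The `N`-th order approximated Hilbert curve, mapping indices `{0,...,4^N-1}`
to nodes of the grid `{0,...,2^N-1} × {0,...,2^N-1} ⊆ ℤ × ℤ`. -/
def hilbert : ℕ → ℕ → ℤ × ℤ
  | 0, _ => (0, 0)
  | 1, i =>
    if i = 0 then (0, 0)
    else if i = 1 then (0, 1)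
    else if i = 2 then (1, 1)
    else (1, 0)
  | N + 2, i =>
    let q := i / 4 ^ (N + 1)
    let s : ℤ := 2 ^ (N + 1)
    let p := hilbert (N + 1) (i % 4 ^ (N + 1))
    if q = 0 then (p.2, p.1)
    else if q = 1 then (p.1, p.2 + s)
    else if q = 2 then (p.1 + s, p.2 + s)
    else (2 * s - 1 - p.2, s - 1 - p.1)

/-- Euclidean distance between two points of `ℤ × ℤ`. -/
noncomputable def euclDist (a b : ℤ × ℤ) : ℝ :=
  Real.sqrt (((a.1 - b.1 : ℤ) : ℝ) ^ 2 + ((a.2 - b.2 : ℤ) : ℝ) ^ 2)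

/-- Two points of `ℤ × ℤ` are edge connected if their Euclidean distance equals 1. -/
def EdgeConnected (a b : ℤ × ℤ) : Prop := euclDist a b = 1

/-- Two points of `ℤ × ℤ` are vertex connected if both coordinates differ by exactly 1. -/
def VertexConnected (a b : ℤ × ℤ) : Prop := |a.1 - b.1| = 1 ∧ |a.2 - b.2| = 1

/-- Membership in the grid `{0,...,2^N-1} × {0,...,2^N-1}`. -/
def InGrid (N : ℕ) (p : ℤ × ℤ) : Prop :=
  0 ≤ p.1 ∧ p.1 ≤ 2 ^ N - 1 ∧ 0 ≤ p.2 ∧ p.2 ≤ 2 ^ N - 1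

/-- The closed segment from `u` to `v` (centres of cells, viewed in `ℝ²`) is disjoint
from the open unit cell centred at `c`. -/
def SegAvoidsCell (u v c : ℤ × ℤ) : Prop :=
  ∀ t : ℝ, t ∈ Set.Icc (0 : ℝ) 1 →
    ¬ (|(1 - t) * (u.1 : ℝ) + t * (v.1 : ℝ) - (c.1 : ℝ)| < 1 / 2 ∧
       |(1 - t) * (u.2 : ℝ) + t * (v.2 : ℝ) - (c.2 : ℝ)| < 1 / 2)

/-- An evasion tour for the blocked index set `B` on the `N`-th order Hilbert grid:
a sequence of waypoints `w 0, ..., w m` in the grid, starting at the entry node,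
ending at the exit node, avoiding all blocked nodes, covering every unblocked grid
point, and whose straight-line segments avoid the interiors of all blocked cells. -/
def IsEvasionTour (N : ℕ) (B : Finset ℕ) (m : ℕ) (w : ℕ → ℤ × ℤ) : Prop :=
  w 0 = hilbert N 0 ∧
  w m = hilbert N (4 ^ N - 1) ∧
  (∀ j ≤ m, InGrid N (w j)) ∧
  (∀ j ≤ m, ∀ b ∈ B, w j ≠ hilbert N b) ∧
  (∀ p : ℤ × ℤ, InGrid N p → (∀ b ∈ B, p ≠ hilbert N b) → ∃ j ≤ m, w j = p) ∧
  (∀ j < m, ∀ b ∈ B, SegAvoidsCell (w j) (w (j + 1)) (hilbert N b))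

/-!
Consecutive Hilbert nodes are edge-adjacent, so the two blocked cells form a domino, and since the
curve is injective the entry `(0, 0)` and the exit `(2 ^ N - 1, 0)` are free. A step between two
edge-adjacent free cells never meets the interior of a blocked cell, so it suffices to find a walk
from entry to exit in the grid graph on the free cells that visits every free cell. It exists as
that finite graph is connected: for side at least 3, every free cell lies on a row or a column
missed by the domino, and any such row meets any such column in a free cell; for `N = 1` the free
cells are the two bottom ones.
-/

open SimpleGraph

-- Quadrant `q` of `hilbert (N + 1)`, as a map of `hilbert N`, where `s = 2 ^ N`.
def hilbertQuadrant (s : ℤ) (q : ℕ) (p : ℤ × ℤ) : ℤ × ℤ :=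
  if q = 0 then (p.2, p.1)
  else if q = 1 then (p.1, p.2 + s)
  else if q = 2 then (p.1 + s, p.2 + s)
  else (2 * s - 1 - p.2, s - 1 - p.1)

noncomputable def gridGraph : SimpleGraph (ℤ × ℤ) := hasse ℤ □ hasse ℤ

lemma gridGraph_adj {u v : ℤ × ℤ} :
    gridGraph.Adj u v ↔
      (u.1 + 1 = v.1 ∨ v.1 + 1 = u.1) ∧ u.2 = v.2 ∨
        (u.2 + 1 = v.2 ∨ v.2 + 1 = u.2) ∧ u.1 = v.1 := by
  simp only [gridGraph, boxProd_adj, hasse_adj, Order.covBy_iff_add_one_eq]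

-- The recursion of `hilbert` also holds from `N = 0` to `N = 1`, which makes `N = 0` the base case.
lemma hilbert_succ (N i : ℕ) :
    hilbert (N + 1) i = hilbertQuadrant (2 ^ N) (i / 4 ^ N) (hilbert N (i % 4 ^ N)) := by
  rcases N with _ | N
  · simp only [hilbert, hilbertQuadrant, pow_zero, Nat.div_one]
    split_ifs <;> simp_all
  · rfl

lemma exists_eq_four_pow_mul_add {N i : ℕ} (hi : i < 4 ^ (N + 1)) :
    ∃ q < 4, ∃ r < 4 ^ N, i = 4 ^ N * q + r :=
  ⟨i / 4 ^ N, Nat.div_lt_of_lt_mul (by rwa [← pow_succ]), i % 4 ^ N,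
    Nat.mod_lt _ (by positivity), (Nat.div_add_mod i _).symm⟩

lemma hilbert_succ_four_pow_mul_add (N q : ℕ) {r : ℕ} (hr : r < 4 ^ N) :
    hilbert (N + 1) (4 ^ N * q + r) = hilbertQuadrant (2 ^ N) q (hilbert N r) := by
  rw [hilbert_succ, Nat.mul_add_div (by positivity), Nat.div_eq_of_lt hr, add_zero,
    Nat.mul_add_mod, Nat.mod_eq_of_lt hr]

lemma hilbert_zero (N : ℕ) : hilbert N 0 = (0, 0) := by
  induction N with
  | zero => rfl
  | succ N ih =>
    simpa [hilbertQuadrant, ih] using hilbert_succ_four_pow_mul_add N 0 (r := 0) (by positivity)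

lemma hilbert_last (N : ℕ) : hilbert N (4 ^ N - 1) = (2 ^ N - 1, 0) := by
  induction N with
  | zero => rfl
  | succ N ih =>
    have hpos : 0 < 4 ^ N := by positivity
    have h : 4 ^ (N + 1) - 1 = 4 ^ N * 3 + (4 ^ N - 1) := by rw [pow_succ]; omega
    rw [h, hilbert_succ_four_pow_mul_add N 3 (by omega), ih]
    simp only [hilbertQuadrant, pow_succ]
    norm_num
    ring

lemma inGrid_hilbertQuadrant {N q : ℕ} {p : ℤ × ℤ} (hp : InGrid N p) :
    InGrid (N + 1) (hilbertQuadrant (2 ^ N) q p) := by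
  unfold InGrid hilbertQuadrant at *
  rw [pow_succ]
  split_ifs <;> dsimp only <;> omega

lemma hilbertQuadrant_eq_iff {N q q' : ℕ} {p p' : ℤ × ℤ} (hq : q < 4) (hq' : q' < 4)
    (hp : InGrid N p) (hp' : InGrid N p') :
    hilbertQuadrant (2 ^ N) q p = hilbertQuadrant (2 ^ N) q' p' ↔ q = q' ∧ p = p' := by
  obtain ⟨p1, p2⟩ := p
  obtain ⟨p1', p2'⟩ := p'
  unfold InGrid at hp hp'
  interval_cases q <;> interval_cases q' <;> simp only [hilbertQuadrant, Prod.ext_iff] <;>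
    norm_num at hp hp' ⊢ <;> omega

lemma gridGraph_adj_hilbertQuadrant {s : ℤ} {q : ℕ} {p p' : ℤ × ℤ} (h : gridGraph.Adj p p') :
    gridGraph.Adj (hilbertQuadrant s q p) (hilbertQuadrant s q p') := by
  rw [gridGraph_adj] at h ⊢
  unfold hilbertQuadrant
  split_ifs <;> dsimp only <;> omega

-- `(s - 1, 0)` and `(0, 0)` are the exit and the entry of `hilbert N`.
lemma gridGraph_adj_hilbertQuadrant_succ {s : ℤ} {q : ℕ} (hq : q < 3) :
    gridGraph.Adj (hilbertQuadrant s q (s - 1, 0)) (hilbertQuadrant s (q + 1) (0, 0)) := by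
  rw [gridGraph_adj]
  interval_cases q <;> grind [hilbertQuadrant]

lemma inGrid_hilbert {N i : ℕ} (hi : i < 4 ^ N) : InGrid N (hilbert N i) := by
  induction N generalizing i with
  | zero =>
    simp [hilbert, InGrid]
  | succ N ih =>
    obtain ⟨q, -, r, hr, rfl⟩ := exists_eq_four_pow_mul_add hi
    rw [hilbert_succ_four_pow_mul_add N q hr]
    exact inGrid_hilbertQuadrant (ih hr)

lemma hilbert_injOn (N : ℕ) : Set.InjOn (hilbert N) (Set.Iio (4 ^ N)) := by
  induction N with
  | zero =>
    intro i hi j hj _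
    simp_all
  | succ N ih =>
    intro i hi j hj h
    obtain ⟨q, hq, r, hr, rfl⟩ := exists_eq_four_pow_mul_add hi
    obtain ⟨q', hq', r', hr', rfl⟩ := exists_eq_four_pow_mul_add hj
    rw [hilbert_succ_four_pow_mul_add N q hr, hilbert_succ_four_pow_mul_add N q' hr',
      hilbertQuadrant_eq_iff hq hq' (inGrid_hilbert hr) (inGrid_hilbert hr')] at h
    rw [h.1, ih hr hr' h.2]

lemma gridGraph_adj_hilbert {N i : ℕ} (hi : i + 1 < 4 ^ N) :
    gridGraph.Adj (hilbert N i) (hilbert N (i + 1)) := by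
  induction N generalizing i with
  | zero => simp at hi
  | succ N ih =>
    obtain ⟨q, hq, r, hr, rfl⟩ := exists_eq_four_pow_mul_add (Nat.lt_of_succ_lt hi)
    rw [hilbert_succ_four_pow_mul_add N q hr]
    by_cases hr1 : r + 1 < 4 ^ N
    · rw [add_assoc, hilbert_succ_four_pow_mul_add N q hr1]
      exact gridGraph_adj_hilbertQuadrant (ih hr1)
    · have hq3 : q < 3 := by
        by_contra!
        rw [pow_succ] at hi
        nlinarith
      have hr' : r = 4 ^ N - 1 := by omega
      have h : 4 ^ N * q + r + 1 = 4 ^ N * (q + 1) + 0 := by rw [mul_add]; omega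
      rw [h, hilbert_succ_four_pow_mul_add N _ (by positivity), hr', hilbert_last, hilbert_zero]
      exact gridGraph_adj_hilbertQuadrant_succ hq3

lemma eq_or_eq_of_abs_segment_sub_lt {a b c : ℤ} (hab : |a - b| ≤ 1) {t : ℝ}
    (ht : t ∈ Set.Icc (0 : ℝ) 1) (h : |(1 - t) * (a : ℝ) + t * (b : ℝ) - (c : ℝ)| < 1 / 2) :
    c = a ∨ c = b := by
  obtain ⟨ht0, ht1⟩ := ht
  by_contra! hc
  rw [abs_le] at hab
  -- `a` and `b` are equal or consecutive, so `c` lies at distance at least 1 beyond both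
  have hside : (a + 1 ≤ c ∧ b + 1 ≤ c) ∨ (c + 1 ≤ a ∧ c + 1 ≤ b) := by omega
  rw [abs_lt] at h
  rcases hside with ⟨ha, hb⟩ | ⟨ha, hb⟩
  · have ha' : (a : ℝ) + 1 ≤ c := by exact_mod_cast ha
    have hb' : (b : ℝ) + 1 ≤ c := by exact_mod_cast hb
    nlinarith
  · have ha' : (c : ℝ) + 1 ≤ a := by exact_mod_cast ha
    have hb' : (c : ℝ) + 1 ≤ b := by exact_mod_cast hb
    nlinarith

lemma segAvoidsCell_of_gridGraph_adj {u v c : ℤ × ℤ} (huv : gridGraph.Adj u v) (hcu : c ≠ u)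
    (hcv : c ≠ v) : SegAvoidsCell u v c := by
  rintro t ht ⟨h1, h2⟩
  rw [gridGraph_adj] at huv
  have hc1 := eq_or_eq_of_abs_segment_sub_lt (abs_le.2 ⟨by omega, by omega⟩) ht h1
  have hc2 := eq_or_eq_of_abs_segment_sub_lt (abs_le.2 ⟨by omega, by omega⟩) ht h2
  simp only [ne_eq, Prod.ext_iff] at hcu hcv
  omega

-- The subgraph of `gridGraph` induced by `S`, kept on the vertex type `ℤ × ℤ` rather than on the
-- subtype `S`, so that walks are sequences of points of `ℤ × ℤ`.
def gridGraphOn (S : Set (ℤ × ℤ)) : SimpleGraph (ℤ × ℤ) where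
  Adj u v := u ∈ S ∧ v ∈ S ∧ gridGraph.Adj u v
  symm := ⟨fun _ _ h => ⟨h.2.1, h.1, h.2.2.symm⟩⟩
  loopless := ⟨fun _ h => h.2.2.ne rfl⟩

@[simp]
lemma gridGraphOn_adj {S : Set (ℤ × ℤ)} {u v : ℤ × ℤ} :
    (gridGraphOn S).Adj u v ↔ u ∈ S ∧ v ∈ S ∧ gridGraph.Adj u v :=
  Iff.rfl

lemma SimpleGraph.exists_walk_forall_mem_support {V : Type*} {G : SimpleGraph V} {s : Set V}
    (hs : s.Finite) {u v : V} (hsu : ∀ x ∈ s, G.Reachable u x) (huv : G.Reachable u v) :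
    ∃ p : G.Walk u v, ∀ x ∈ s, x ∈ p.support := by
  induction s, hs using Set.Finite.induction_on generalizing u with
  | empty => exact ⟨huv.some, by simp⟩
  | @insert a s _ _ ih =>
    have hua := hsu a (Set.mem_insert a s)
    obtain ⟨q, hq⟩ := ih (fun x hx => hua.symm.trans (hsu x (Set.mem_insert_of_mem a hx)))
      (hua.symm.trans huv)
    refine ⟨hua.some.append q, Set.forall_mem_insert.2 ⟨?_, fun x hx => ?_⟩⟩
    · simp [Walk.mem_support_append_iff]
    · exact (Walk.mem_support_append_iff _ _).2 (Or.inr (hq x hx))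

lemma SimpleGraph.reachable_of_forall_adj_succ {V : Type*} {G : SimpleGraph V} (f : ℤ → V)
    {a b : ℤ} (hab : a ≤ b) (h : ∀ i, a ≤ i → i < b → G.Adj (f i) (f (i + 1))) :
    G.Reachable (f a) (f b) := by
  induction b, hab using Int.leInduction with
  | base => rfl
  | succ b hab ih =>
    exact (ih fun i h1 h2 => h i h1 (by omega)).trans (h b hab (by omega)).reachable

section Connectivity

variable {S : Set (ℤ × ℤ)} {m n : ℤ}

lemma gridGraphOn_reachable_of_row {r : ℤ} (hrow : ∀ i ∈ Set.Ico 0 m, (i, r) ∈ S) {a b : ℤ}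
    (ha : a ∈ Set.Ico 0 m) (hb : b ∈ Set.Ico 0 m) : (gridGraphOn S).Reachable (a, r) (b, r) := by
  wlog hab : a ≤ b
  · exact (this hrow hb ha (by omega)).symm
  refine reachable_of_forall_adj_succ (fun i => (i, r)) hab fun i h1 h2 => ?_
  exact gridGraphOn_adj.2
    ⟨hrow i (by grind), hrow (i + 1) (by grind), by simp [gridGraph_adj]⟩

lemma gridGraphOn_reachable_of_column {c : ℤ} (hcol : ∀ j ∈ Set.Ico 0 n, (c, j) ∈ S) {a b : ℤ}
    (ha : a ∈ Set.Ico 0 n) (hb : b ∈ Set.Ico 0 n) : (gridGraphOn S).Reachable (c, a) (c, b) := by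
  wlog hab : a ≤ b
  · exact (this hcol hb ha (by omega)).symm
  refine reachable_of_forall_adj_succ (fun j => (c, j)) hab fun j h1 h2 => ?_
  exact gridGraphOn_adj.2
    ⟨hcol j (by grind), hcol (j + 1) (by grind), by simp [gridGraph_adj]⟩

lemma exists_mem_Ico_ne_ne (hn : 3 ≤ n) (p q : ℤ) : ∃ r ∈ Set.Ico 0 n, r ≠ p ∧ r ≠ q := by
  rcases (by omega : (0 ≠ p ∧ 0 ≠ q) ∨ (1 ≠ p ∧ 1 ≠ q) ∨ (2 ≠ p ∧ 2 ≠ q)) with h | h | h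
  exacts [⟨0, ⟨le_rfl, by omega⟩, h⟩, ⟨1, ⟨by omega, by omega⟩, h⟩, ⟨2, ⟨by omega, by omega⟩, h⟩]

theorem gridGraphOn_reachable_of_domino (hm : 3 ≤ m) (hn : 3 ≤ n) {b c : ℤ × ℤ}
    (hbc : gridGraph.Adj b c) {x y : ℤ × ℤ} (hx : x ∈ Set.Ico 0 m ×ˢ Set.Ico 0 n \ {b, c})
    (hy : y ∈ Set.Ico 0 m ×ˢ Set.Ico 0 n \ {b, c}) :
    (gridGraphOn (Set.Ico 0 m ×ˢ Set.Ico 0 n \ {b, c})).Reachable x y := by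
  set S := Set.Ico 0 m ×ˢ Set.Ico 0 n \ {b, c}
  have hrow : ∀ r ∈ Set.Ico 0 n, r ≠ b.2 → r ≠ c.2 → ∀ i ∈ Set.Ico 0 m, (i, r) ∈ S := by
    intro r hr hrb hrc i hi
    refine ⟨⟨hi, hr⟩, ?_⟩
    rintro (rfl | rfl) <;> simp_all
  have hcol : ∀ i ∈ Set.Ico 0 m, i ≠ b.1 → i ≠ c.1 → ∀ j ∈ Set.Ico 0 n, (i, j) ∈ S := by
    intro i hi hib hic j hj
    refine ⟨⟨hi, hj⟩, ?_⟩
    rintro (rfl | rfl) <;> simp_all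
  obtain ⟨r₀, hr₀, hr₀b, hr₀c⟩ := exists_mem_Ico_ne_ne hn b.2 c.2
  obtain ⟨c₀, hc₀, hc₀b, hc₀c⟩ := exists_mem_Ico_ne_ne hm b.1 c.1
  -- `b` and `c` share a row or a column, so a cell whose row and column both meet the domino is
  -- `b` or `c`.
  have hline : ∀ z ∈ S, (z.2 ≠ b.2 ∧ z.2 ≠ c.2) ∨ (z.1 ≠ b.1 ∧ z.1 ≠ c.1) := by
    rintro ⟨z₁, z₂⟩ ⟨-, hz⟩
    simp only [Set.mem_insert_iff, Set.mem_singleton_iff, Prod.ext_iff, not_or] at hz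
    rw [gridGraph_adj] at hbc
    omega
  have hhub : ∀ z ∈ S, (gridGraphOn S).Reachable z (c₀, r₀) := by
    rintro ⟨z₁, z₂⟩ hz
    obtain ⟨hz₁, hz₂⟩ := hz.1
    rcases hline _ hz with ⟨h₁, h₂⟩ | ⟨h₁, h₂⟩
    · exact (gridGraphOn_reachable_of_row (hrow z₂ hz₂ h₁ h₂) hz₁ hc₀).trans
        (gridGraphOn_reachable_of_column (hcol c₀ hc₀ hc₀b hc₀c) hz₂ hr₀)
    · exact (gridGraphOn_reachable_of_column (hcol z₁ hz₁ h₁ h₂) hz₂ hr₀).trans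
        (gridGraphOn_reachable_of_row (hrow r₀ hr₀ hr₀b hr₀c) hz₁ hc₀)
  exact (hhub x hx).trans (hhub y hy).symm

end Connectivity

def freeCells (N : ℕ) (B : Finset ℕ) : Set (ℤ × ℤ) :=
  {p | InGrid N p ∧ ∀ b ∈ B, p ≠ hilbert N b}

lemma inGrid_iff {N : ℕ} {p : ℤ × ℤ} :
    InGrid N p ↔ p ∈ Set.Ico 0 (2 ^ N) ×ˢ Set.Ico 0 (2 ^ N) := by
  simp only [InGrid, Set.mem_prod, Set.mem_Ico]
  omega

lemma freeCells_finite (N : ℕ) (B : Finset ℕ) : (freeCells N B).Finite :=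
  ((Set.finite_Ico _ _).prod (Set.finite_Ico _ _)).subset fun _ hp => inGrid_iff.1 hp.1

lemma freeCells_pair (N a b : ℕ) :
    freeCells N {a, b} = Set.Ico 0 (2 ^ N) ×ˢ Set.Ico 0 (2 ^ N) \ {hilbert N a, hilbert N b} := by
  ext p
  simp [freeCells, inGrid_iff]

lemma hilbert_mem_freeCells {N i : ℕ} {B : Finset ℕ} (hi : i < 4 ^ N) (hiB : i ∉ B)
    (hB : ∀ b ∈ B, b < 4 ^ N) : hilbert N i ∈ freeCells N B :=
  ⟨inGrid_hilbert hi, fun b hb h => hiB (hilbert_injOn N hi (hB b hb) h ▸ hb)⟩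

lemma isEvasionTour_of_walk {N : ℕ} {B : Finset ℕ}
    (p : (gridGraphOn (freeCells N B)).Walk (hilbert N 0) (hilbert N (4 ^ N - 1)))
    (hend : hilbert N (4 ^ N - 1) ∈ freeCells N B) (hcover : ∀ x ∈ freeCells N B, x ∈ p.support) :
    IsEvasionTour N B p.length p.getVert := by
  have hmem : ∀ j ≤ p.length, p.getVert j ∈ freeCells N B := by
    intro j hj
    rcases hj.lt_or_eq with hj | rfl
    · exact (p.adj_getVert_succ hj).1
    · rwa [p.getVert_length]
  refine ⟨p.getVert_zero, p.getVert_length, fun j hj => (hmem j hj).1, fun j hj => (hmem j hj).2,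
    fun x hx hxB => ?_, fun j hj b hb => ?_⟩
  · obtain ⟨j, hjx, hj⟩ := Walk.mem_support_iff_exists_getVert.1 (hcover x ⟨hx, hxB⟩)
    exact ⟨j, hj, hjx⟩
  · obtain ⟨hu, hv, hadj⟩ := p.adj_getVert_succ hj
    exact segAvoidsCell_of_gridGraph_adj hadj (hu.2 b hb).symm (hv.2 b hb).symm

lemma gridGraphOn_freeCells_one_reachable {x : ℤ × ℤ} (hx : x ∈ freeCells 1 {1, 2}) :
    (gridGraphOn (freeCells 1 {1, 2})).Reachable (hilbert 1 0) x := by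
  have h₀ : hilbert 1 0 ∈ freeCells 1 {1, 2} :=
    hilbert_mem_freeCells (by norm_num) (by simp) (by simp)
  obtain ⟨x₁, x₂⟩ := x
  have hx' : (x₁, x₂) = hilbert 1 0 ∨ (x₁, x₂) = (1, 0) := by
    obtain ⟨⟨h₁, h₂, h₃, h₄⟩, hB⟩ := hx
    have hb₁ : (x₁, x₂) ≠ (0, 1) := hB 1 (by simp)
    have hb₂ : (x₁, x₂) ≠ (1, 1) := hB 2 (by simp)
    rw [hilbert_zero, Prod.ext_iff, Prod.ext_iff]
    rw [Ne, Prod.ext_iff] at hb₁ hb₂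
    dsimp only at *
    omega
  rcases hx' with h | h
  · rw [h]
  · rw [h] at hx ⊢
    exact Adj.reachable (gridGraphOn_adj.2 ⟨h₀, hx, by simp [hilbert, gridGraph_adj]⟩)

theorem hilbert_evade_two_consecutive_blocked_general (N n1 n2 : ℕ)
    (h1 : 1 ≤ n1) (hn2 : n2 = n1 + 1) (h2 : n2 ≤ 4 ^ N - 2) :
    ∃ (m : ℕ) (w : ℕ → ℤ × ℤ), IsEvasionTour N {n1, n2} m w := by
  subst hn2
  have hB : ∀ b ∈ ({n1, n1 + 1} : Finset ℕ), b < 4 ^ N := by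
    simp only [Finset.mem_insert, Finset.mem_singleton, forall_eq_or_imp, forall_eq]; omega
  have hstart := hilbert_mem_freeCells (i := 0) (by omega)
    (by simp only [Finset.mem_insert, Finset.mem_singleton]; omega) hB
  have hend := hilbert_mem_freeCells (i := 4 ^ N - 1) (by omega)
    (by simp only [Finset.mem_insert, Finset.mem_singleton]; omega) hB
  have hconn : ∀ x ∈ freeCells N {n1, n1 + 1},
      (gridGraphOn (freeCells N {n1, n1 + 1})).Reachable (hilbert N 0) x := by
    rcases N with _ | _ | N
    · simp at h2
    · obtain rfl : n1 = 1 := by norm_num at h2; omega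
      exact fun x hx => gridGraphOn_freeCells_one_reachable hx
    · have h3 : (3 : ℤ) ≤ 2 ^ (N + 2) :=
        le_trans (by norm_num) (pow_le_pow_right₀ (by norm_num) (by omega : 2 ≤ N + 2))
      rw [freeCells_pair] at hstart ⊢
      exact fun x hx => gridGraphOn_reachable_of_domino h3 h3 (gridGraph_adj_hilbert (by omega))
        hstart hx
  obtain ⟨p, hp⟩ := exists_walk_forall_mem_support (freeCells_finite N _) hconn (hconn _ hend)
  exact ⟨_, _, isEvasionTour_of_walk p hend hp⟩

theorem hilbert_evade_two_consecutive_blocked (N n1 n2 : ℕ) (hN : 1 ≤ N)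
    (h1 : 1 ≤ n1) (hn2 : n2 = n1 + 1) (h2 : n2 ≤ 4 ^ N - 2) :
    ∃ (m : ℕ) (w : ℕ → ℤ × ℤ), IsEvasionTour N {n1, n2} m w :=
  hilbert_evade_two_consecutive_blocked_general N n1 n2 h1 hn2 h2
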